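/- Let 𝒴 and 𝒵 be finite types, p a joint probability mass function on 𝒴 × 𝒵 with marginals p_Y, p_Z, and for each z ∈ 𝒵 let q(·|z) be a probability mass function on 𝒴 satisfying q(y|z) > 0 whenever p(y,z) > 0. Then H(Y) + Σ_{(y,z)} p(y,z)·log q(y|z) ≤ I(Y,Z), where H(Y) := −Σ_y p_Y(y)·log p_Y(y) is the Shannon entropy of the marginal and I(Y,Z) is the mutual information; equivalently, the Barber–Agakov quantity H(Y) + E_{p(y,z)}[log q(y|z)] is a lower bound on I(Y,Z). Equality holds when q(y|z) = p(y,z)/p_Z(z) for all (y,z) with p_Z(z) > 0. -/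

import Mathlib

/-! Writing `r(y,z) = p(z) q(y|z)`, the pointwise identity
`log (p(y,z) / (p(y) p(z))) = -log p(y) + log q(y|z) + log (p(y,z) / r(y,z))` on the support of
`p` shows that `I(Y,Z)` exceeds `H(Y) + E[log q(Y|Z)]` by the relative entropy `KL(p ‖ r)`.
Since `r` has the same total mass as `p`, this is nonnegative by Gibbs' inequality
`a - b ≤ a log (a / b)`, and it vanishes when `r = p` on the support of `p`, i.e. when `q` is the
true conditional. -/

open Finset

noncomputable def mutualInfo {Y Z : Type*} [Fintype Y] [Fintype Z]
    (p : Y × Z → ℝ) (pY : Y → ℝ) (pZ : Z → ℝ) : ℝ :=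
  ∑ yz : Y × Z, p yz * Real.log (p yz / (pY yz.1 * pZ yz.2))

noncomputable def shannonEntropy {Y : Type*} [Fintype Y] (pY : Y → ℝ) : ℝ :=
  -∑ y, pY y * Real.log (pY y)

open Real

noncomputable def klDivergence {ι : Type*} [Fintype ι] (p r : ι → ℝ) : ℝ :=
  ∑ i, p i * log (p i / r i)

section Gibbs

variable {ι : Type*} [Fintype ι] {p r : ι → ℝ}

lemma sub_le_mul_log_div {a b : ℝ} (ha : 0 ≤ a) (hb : 0 ≤ b) (hab : 0 < a → 0 < b) :
    a - b ≤ a * log (a / b) := by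
  rcases ha.eq_or_lt with rfl | ha
  · simpa using hb
  have hb := hab ha
  calc a - b = a * (1 - (a / b)⁻¹) := by field_simp
    _ ≤ a * log (a / b) := by gcongr; exact one_sub_inv_le_log_of_pos (by positivity)

lemma klDivergence_nonneg (hp : ∀ i, 0 ≤ p i) (hr : ∀ i, 0 ≤ r i) (hpr : ∀ i, 0 < p i → 0 < r i)
    (hsum : ∑ i, r i ≤ ∑ i, p i) : 0 ≤ klDivergence p r :=
  calc 0 ≤ ∑ i, (p i - r i) := by rw [sum_sub_distrib]; linarith
    _ ≤ klDivergence p r := sum_le_sum fun i _ => sub_le_mul_log_div (hp i) (hr i) (hpr i)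

lemma klDivergence_eq_zero_of_eq (hp : ∀ i, 0 ≤ p i) (h : ∀ i, 0 < p i → r i = p i) :
    klDivergence p r = 0 := by
  refine sum_eq_zero fun i _ => ?_
  rcases (hp i).eq_or_lt with hi | hi
  · rw [← hi, zero_mul]
  · rw [h i hi, div_self hi.ne', log_one, mul_zero]

end Gibbs

section Marginals

variable {Y Z : Type*} {p : Y × Z → ℝ} {pY : Y → ℝ} {pZ : Z → ℝ}

lemma shannonEntropy_eq_neg_sum_mul_log_marginal [Fintype Y] [Fintype Z]
    (hpY : ∀ y, pY y = ∑ z, p (y, z)) :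
    shannonEntropy pY = -∑ yz : Y × Z, p yz * log (pY yz.1) := by
  simp only [shannonEntropy, Fintype.sum_prod_type, ← sum_mul, ← hpY]

lemma marginal_left_pos [Fintype Z] (hp0 : ∀ yz, 0 ≤ p yz) (hpY : ∀ y, pY y = ∑ z, p (y, z))
    {y : Y} {z : Z} (h : 0 < p (y, z)) : 0 < pY y :=
  hpY y ▸ sum_pos' (fun z _ => hp0 (y, z)) ⟨z, mem_univ z, h⟩

lemma marginal_right_pos [Fintype Y] (hp0 : ∀ yz, 0 ≤ p yz) (hpZ : ∀ z, pZ z = ∑ y, p (y, z))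
    {y : Y} {z : Z} (h : 0 < p (y, z)) : 0 < pZ z :=
  hpZ z ▸ sum_pos' (fun y _ => hp0 (y, z)) ⟨y, mem_univ y, h⟩

lemma mutualInfo_eq_add_klDivergence [Fintype Y] [Fintype Z] {q : Z → Y → ℝ}
    (hp0 : ∀ yz, 0 ≤ p yz) (hpY : ∀ y, pY y = ∑ z, p (y, z)) (hpZ : ∀ z, pZ z = ∑ y, p (y, z))
    (hqpos : ∀ y z, 0 < p (y, z) → 0 < q z y) :
    mutualInfo p pY pZ = shannonEntropy pY + ∑ yz : Y × Z, p yz * log (q yz.2 yz.1) +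
      klDivergence p (fun yz => pZ yz.2 * q yz.2 yz.1) := by
  rw [shannonEntropy_eq_neg_sum_mul_log_marginal hpY, mutualInfo, klDivergence, neg_add_eq_sub,
    ← sum_sub_distrib, ← sum_add_distrib]
  refine sum_congr rfl fun ⟨y, z⟩ _ => ?_
  rcases (hp0 (y, z)).eq_or_lt with h | h
  · simp [← h]
  have hy : 0 < pY y := marginal_left_pos hp0 hpY h
  have hz : 0 < pZ z := marginal_right_pos hp0 hpZ h
  have hq := hqpos y z h
  rw [log_div h.ne' (by positivity), log_div h.ne' (by positivity), log_mul hy.ne' hz.ne',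
    log_mul hz.ne' hq.ne']
  ring

end Marginals

theorem barber_agakov_bound_general {Y Z : Type*} [Fintype Y] [Fintype Z]
    (p : Y × Z → ℝ) (pY : Y → ℝ) (pZ : Z → ℝ) (q : Z → Y → ℝ)
    (hp0 : ∀ yz, 0 ≤ p yz)
    (hpY : ∀ y, pY y = ∑ z, p (y, z)) (hpZ : ∀ z, pZ z = ∑ y, p (y, z))
    (hq0 : ∀ z y, 0 ≤ q z y) (hq1 : ∀ z, ∑ y, q z y = 1)
    (hqpos : ∀ y z, 0 < p (y, z) → 0 < q z y) :
    shannonEntropy pY + (∑ yz : Y × Z, p yz * Real.log (q yz.2 yz.1))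
      ≤ mutualInfo p pY pZ ∧
    ((∀ y z, 0 < pZ z → q z y = p (y, z) / pZ z) →
      shannonEntropy pY + (∑ yz : Y × Z, p yz * Real.log (q yz.2 yz.1))
        = mutualInfo p pY pZ) := by
  rw [mutualInfo_eq_add_klDivergence hp0 hpY hpZ hqpos]
  have hr0 : ∀ yz : Y × Z, 0 ≤ pZ yz.2 * q yz.2 yz.1 := fun ⟨y, z⟩ =>
    mul_nonneg (hpZ z ▸ sum_nonneg fun y _ => hp0 (y, z)) (hq0 z y)
  have hrpos : ∀ yz : Y × Z, 0 < p yz → 0 < pZ yz.2 * q yz.2 yz.1 := fun ⟨y, z⟩ h =>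
    mul_pos (marginal_right_pos hp0 hpZ h) (hqpos y z h)
  have hmass : ∑ yz : Y × Z, pZ yz.2 * q yz.2 yz.1 = ∑ yz, p yz := by
    simp only [Fintype.sum_prod_type_right, ← mul_sum, hq1, mul_one, hpZ]
  refine ⟨le_add_of_nonneg_right (klDivergence_nonneg hp0 hr0 hrpos hmass.le), fun htrue => ?_⟩
  have hr_eq : ∀ yz : Y × Z, 0 < p yz → pZ yz.2 * q yz.2 yz.1 = p yz := fun ⟨y, z⟩ h => by
    have hz := marginal_right_pos hp0 hpZ h
    rw [htrue y z hz, mul_div_cancel₀ _ hz.ne']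
  rw [klDivergence_eq_zero_of_eq hp0 hr_eq, add_zero]

/-- The Barber–Agakov bound: for any model conditional `q(·|z)`,
`H(Y) + E_{p(y,z)}[log q(y|z)] ≤ I(Y,Z)`, with equality when `q` is the true conditional. -/
theorem barber_agakov_bound {Y Z : Type*} [Fintype Y] [Fintype Z]
    (p : Y × Z → ℝ) (pY : Y → ℝ) (pZ : Z → ℝ) (q : Z → Y → ℝ)
    (hp0 : ∀ yz, 0 ≤ p yz) (hp1 : ∑ yz : Y × Z, p yz = 1)
    (hpY : ∀ y, pY y = ∑ z, p (y, z)) (hpZ : ∀ z, pZ z = ∑ y, p (y, z))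
    (hq0 : ∀ z y, 0 ≤ q z y) (hq1 : ∀ z, ∑ y, q z y = 1)
    (hqpos : ∀ y z, 0 < p (y, z) → 0 < q z y) :
    shannonEntropy pY + (∑ yz : Y × Z, p yz * Real.log (q yz.2 yz.1))
      ≤ mutualInfo p pY pZ ∧
    ((∀ y z, 0 < pZ z → q z y = p (y, z) / pZ z) →
      shannonEntropy pY + (∑ yz : Y × Z, p yz * Real.log (q yz.2 yz.1))
        = mutualInfo p pY pZ) :=
  barber_agakov_bound_general p pY pZ q hp0 hpY hpZ hq0 hq1 hqpos
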